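/- arXiv:math/0001009 — 2 statements merged into one kernel-verified Lean document; each statement's English description precedes it below -/
import Mathlib

section
/- If a system of m congruences (L_i, R_i), 1 ≤ i ≤ m, on {1,…,r} has a quasi-solution in S² consisting of nonempty open sets, with the witnessing maps taken from the group of isometries of S², then the system is consistent. -/
open Set

/-- Congruences deducible from a set of congruence pairs on `{1,…,r}` (encoded as `Fin r`):
closure under symmetry, complementation and transitivity. -/
inductive CongDed {r : ℕ} (S : Set (Set (Fin r) × Set (Fin r))) :
    Set (Fin r) → Set (Fin r) → Prop
  | base {A B : Set (Fin r)} : (A, B) ∈ S → CongDed S A B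
  | symm {A B : Set (Fin r)} : CongDed S A B → CongDed S B A
  | compl {A B : Set (Fin r)} : CongDed S A B → CongDed S Aᶜ Bᶜ
  | trans {A B C : Set (Fin r)} : CongDed S A B → CongDed S B C → CongDed S A C

/-- The system of congruences `(L i, R i)` is weak: no congruence between a set and its
complement is deducible from it. -/
def SysWeak {r m : ℕ} (L R : Fin m → Set (Fin r)) : Prop :=
  ∀ A : Set (Fin r), ¬ CongDed {p | ∃ i, p = (L i, R i)} A Aᶜ

/-- The system is nonredundant: no congruence of the system is deducible from the system with
that congruence removed, and there is no identity congruence. -/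
def SysNonredundant {r m : ℕ} (L R : Fin m → Set (Fin r)) : Prop :=
  (∀ i, ¬ CongDed {p | ∃ j, j ≠ i ∧ p = (L j, R j)} (L i) (R i)) ∧ ∀ i, L i ≠ R i

/-- Subcongruences deducible from the system. -/
inductive SubCong {r m : ℕ} (L R : Fin m → Set (Fin r)) :
    Set (Fin r) → Set (Fin r) → Prop
  | subset {A B : Set (Fin r)} : A ⊆ B → SubCong L R A B
  | trans {A B C : Set (Fin r)} : SubCong L R A B → SubCong L R B C → SubCong L R A C
  | lr (i : Fin m) : SubCong L R (L i) (R i)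
  | rl (i : Fin m) : SubCong L R (R i) (L i)
  | lrc (i : Fin m) : SubCong L R (L i)ᶜ (R i)ᶜ
  | rlc (i : Fin m) : SubCong L R (R i)ᶜ (L i)ᶜ

/-- The system is consistent: there is no deducible subcongruence `L ⪯ R` with `R` a proper
subset of `L`. -/
def SysConsistent {r m : ℕ} (L R : Fin m → Set (Fin r)) : Prop :=
  ∀ A B : Set (Fin r), SubCong L R A B → ¬ B ⊂ A

/-- All congruences of the system are proper. -/
def SysProper {r m : ℕ} (L R : Fin m → Set (Fin r)) : Prop :=
  ∀ i, (L i).Nonempty ∧ L i ≠ univ ∧ (R i).Nonempty ∧ R i ≠ univ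
noncomputable section

/-- Euclidean 3-space. -/
abbrev E3 := EuclideanSpace ℝ (Fin 3)

/-- The unit sphere `S²` in `ℝ³`. -/
def S2 : Set E3 := Metric.sphere 0 1

/-- The self-map of `S²` obtained by restricting a linear isometry equivalence of `ℝ³`
(an element of O(3)); such restrictions are exactly the isometries of `S²`. -/
def sphereMap (f : E3 ≃ₗᵢ[ℝ] E3) (x : S2) : S2 :=
  ⟨f x.1, by
    have hx : ‖(x : E3)‖ = 1 := by simpa [S2, mem_sphere_zero_iff_norm] using x.2
    simp [S2, mem_sphere_zero_iff_norm, f.norm_map, hx]⟩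

/-- An element of O(3) is a rotation iff it has determinant 1 (i.e. lies in SO(3)). -/
def IsRotation (f : E3 ≃ₗᵢ[ℝ] E3) : Prop :=
  LinearMap.det (f.toLinearEquiv : E3 →ₗ[ℝ] E3) = 1

end

/-!
Write `U B = ⋃ k ∈ B, A k`. Reading a congruence as `e '' U L ≤ᶠ[residual] U R` for an isometry
`e`, the deduction rules of `SubCong` are sound: complements are handled because the pieces are
quasi-disjoint and quasi-cover the space. So a deducible `P ⪯ Q` with `Q ⊂ P` gives an isometry
`e` with `e '' U P` quasi-contained in `U Q`. As `U P` is open, Baire's theorem upgrades this to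
`e '' closure (U P) ⊆ closure (U Q) ⊆ closure (U P)`, and an isometry of a compact space cannot
map a closed set into a proper closed subset, since every point is recurrent. Hence a piece
`A k` with `k ∈ P \ Q` lies in `closure (U Q)`; being open it meets `U Q` in a nonempty open set,
which is meagre by quasi-disjointness, contradicting Baire's theorem.
-/

open Filter

section Residual

variable {X Y : Type*} [TopologicalSpace X] [TopologicalSpace Y] {s t : Set X}

theorem isMeagre_diff_iff_eventuallyLE : IsMeagre (s \ t) ↔ s ≤ᶠ[residual X] t := by
  rw [IsMeagre, compl_sdiff]
  exact Iff.of_eq (congrArg (· ∈ residual X) (by ext x; exact or_comm.trans imp_iff_not_or.symm))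

theorem isMeagre_symmDiff_iff_eventuallyEq :
    IsMeagre (symmDiff s t) ↔ s =ᶠ[residual X] t :=
  calc IsMeagre (symmDiff s t) ↔ IsMeagre (s \ t) ∧ IsMeagre (t \ s) := by
        simp only [symmDiff_def, IsMeagre, sup_eq_union, compl_union, inter_mem_iff]
    _ ↔ s =ᶠ[residual X] t :=
        (isMeagre_diff_iff_eventuallyLE.and isMeagre_diff_iff_eventuallyLE).trans
          eventuallyLE_antisymm_iff.symm

theorem Homeomorph.image_eventuallyLE_residual (e : X ≃ₜ Y) (h : s ≤ᶠ[residual X] t) :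
    e '' s ≤ᶠ[residual Y] e '' t := by
  simp only [e.image_eq_preimage_symm]
  exact (tendsto_residual_of_isOpenMap e.symm.continuous e.symm.isOpenMap).eventually h

theorem Homeomorph.image_eventuallyEq_residual (e : X ≃ₜ Y) (h : s =ᶠ[residual X] t) :
    e '' s =ᶠ[residual Y] e '' t :=
  (e.image_eventuallyLE_residual h.le).antisymm (e.image_eventuallyLE_residual h.symm.le)

theorem IsOpen.subset_closure_of_eventuallyLE_residual [BaireSpace X] (hs : IsOpen s)
    (h : s ≤ᶠ[residual X] t) : s ⊆ closure t := by
  by_contra hst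
  refine not_isMeagre_of_isOpen (hs.sdiff isClosed_closure) (sdiff_nonempty.mpr hst) ?_
  exact (isMeagre_diff_iff_eventuallyLE.mpr h).mono (sdiff_subset_sdiff_right subset_closure)

end Residual

section Pieces

variable {X ι : Type*} [TopologicalSpace X] {A : ι → Set X}

theorem isMeagre_biUnion_inter_biUnion [Countable ι]
    (hqd : ∀ k k', k ≠ k' → IsMeagre (A k ∩ A k')) {B C : Set ι} (hBC : Disjoint B C) :
    IsMeagre ((⋃ k ∈ B, A k) ∩ ⋃ k ∈ C, A k) := by
  simp only [iUnion₂_inter, inter_iUnion₂]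
  refine isMeagre_iUnion fun k' => isMeagre_iUnion fun hk' => isMeagre_iUnion fun k =>
    isMeagre_iUnion fun hk => hqd k k' ?_
  rintro rfl
  exact hBC.notMem_of_mem_left hk hk'

-- Without the ascription, `ᶜ` would elaborate as the pointwise complement on `X → Prop`.
theorem biUnion_compl_eventuallyEq_compl [Countable ι]
    (hqd : ∀ k k', k ≠ k' → IsMeagre (A k ∩ A k')) (hcover : (⋃ k, A k) ∈ residual X)
    (B : Set ι) : (⋃ k ∈ Bᶜ, A k) =ᶠ[residual X] ((⋃ k ∈ B, A k)ᶜ : Set X) := by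
  refine EventuallyLE.antisymm (isMeagre_diff_iff_eventuallyLE.mp ?_)
    (isMeagre_diff_iff_eventuallyLE.mp ?_)
  · rw [sdiff_compl, inter_comm]
    exact isMeagre_biUnion_inter_biUnion hqd disjoint_compl_right
  · refine (show IsMeagre (⋃ k, A k)ᶜ by rwa [IsMeagre, compl_compl]).mono ?_
    intro x hx hcov
    obtain ⟨k, hk⟩ := mem_iUnion.mp hcov
    by_cases hkB : k ∈ B
    · exact hx.1 (mem_biUnion hkB hk)
    · exact hx.2 (mem_biUnion hkB hk)

theorem Homeomorph.symm_image_biUnion_eventuallyEq (e : X ≃ₜ X) {P Q : Set ι}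
    (h : e '' (⋃ k ∈ P, A k) =ᶠ[residual X] ⋃ k ∈ Q, A k) :
    e.symm '' (⋃ k ∈ Q, A k) =ᶠ[residual X] ⋃ k ∈ P, A k := by
  simpa only [e.image_symm, e.preimage_image] using
    e.symm.image_eventuallyEq_residual h.symm

theorem Homeomorph.image_biUnion_compl_eventuallyEq [Countable ι]
    (hqd : ∀ k k', k ≠ k' → IsMeagre (A k ∩ A k')) (hcover : (⋃ k, A k) ∈ residual X)
    (e : X ≃ₜ X) {P Q : Set ι} (h : e '' (⋃ k ∈ P, A k) =ᶠ[residual X] ⋃ k ∈ Q, A k) :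
    e '' (⋃ k ∈ Pᶜ, A k) =ᶠ[residual X] ⋃ k ∈ Qᶜ, A k :=
  ((e.image_eventuallyEq_residual (biUnion_compl_eventuallyEq_compl hqd hcover P)).trans
    (e.image_compl _).eventuallyEq).trans
    (h.compl.trans (biUnion_compl_eventuallyEq_compl hqd hcover Q).symm)

end Pieces

theorem SubCong.exists_isometryEquiv_image_eventuallyLE {X : Type*} [PseudoEMetricSpace X]
    {r m : ℕ} {L R : Fin m → Set (Fin r)} {A : Fin r → Set X}
    (hqd : ∀ k k', k ≠ k' → IsMeagre (A k ∩ A k')) (hcover : (⋃ k, A k) ∈ residual X)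
    (hwit : ∀ i, ∃ e : X ≃ᵢ X, e '' (⋃ k ∈ L i, A k) =ᶠ[residual X] ⋃ k ∈ R i, A k)
    {B C : Set (Fin r)} (h : SubCong L R B C) :
    ∃ e : X ≃ᵢ X, e '' (⋃ k ∈ B, A k) ≤ᶠ[residual X] ⋃ k ∈ C, A k := by
  induction h with
  | subset hBC =>
    refine ⟨IsometryEquiv.refl X, ?_⟩
    rw [show ⇑(IsometryEquiv.refl X) = id from rfl, image_id]
    exact LE.le.eventuallyLE (biUnion_subset_biUnion_left hBC)
  | trans _ _ ih₁ ih₂ =>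
    obtain ⟨e₁, h₁⟩ := ih₁
    obtain ⟨e₂, h₂⟩ := ih₂
    refine ⟨e₁.trans e₂, ?_⟩
    rw [show ⇑(e₁.trans e₂) = e₂ ∘ e₁ from rfl, image_comp]
    exact (e₂.toHomeomorph.image_eventuallyLE_residual h₁).trans h₂
  | lr i =>
    obtain ⟨e, he⟩ := hwit i
    exact ⟨e, he.le⟩
  | rl i =>
    obtain ⟨e, he⟩ := hwit i
    exact ⟨e.symm, (e.toHomeomorph.symm_image_biUnion_eventuallyEq he).le⟩
  | lrc i =>
    obtain ⟨e, he⟩ := hwit i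
    exact ⟨e, (e.toHomeomorph.image_biUnion_compl_eventuallyEq hqd hcover he).le⟩
  | rlc i =>
    obtain ⟨e, he⟩ := hwit i
    exact ⟨e.symm, (e.symm.toHomeomorph.image_biUnion_compl_eventuallyEq hqd hcover
      (e.toHomeomorph.symm_image_biUnion_eventuallyEq he)).le⟩

theorem Isometry.iterate {X : Type*} [PseudoEMetricSpace X] {f : X → X} (hf : Isometry f) :
    ∀ n, Isometry f^[n]
  | 0 => isometry_id
  | n + 1 => (hf.iterate n).comp hf

section Compact

variable {X : Type*} [MetricSpace X] [CompactSpace X] {f : X → X}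

theorem Isometry.mem_closure_range_iterate (hf : Isometry f) (x : X) :
    x ∈ closure (range fun n => f^[n + 1] x) := by
  obtain ⟨_, φ, hφ, hlim⟩ := CompactSpace.tendsto_subseq fun n => f^[n] x
  refine Metric.mem_closure_range_iff.mpr fun ε hε => ?_
  obtain ⟨N, hN⟩ := Metric.cauchySeq_iff.mp hlim.cauchySeq ε hε
  have hgap : φ N + 1 ≤ φ (N + 1) := hφ (Nat.lt_succ_self N)
  refine ⟨φ (N + 1) - φ N - 1, ?_⟩
  calc dist x (f^[φ (N + 1) - φ N - 1 + 1] x)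
      = dist (f^[φ N] x) (f^[φ N] (f^[φ (N + 1) - φ N - 1 + 1] x)) :=
        ((hf.iterate _).dist_eq _ _).symm
    _ = dist (f^[φ N] x) (f^[φ (N + 1)] x) := by
        rw [← Function.iterate_add_apply]; congr 2; omega
    _ < ε := hN N le_rfl (N + 1) N.le_succ

theorem Isometry.subset_of_mapsTo (hf : Isometry f) {s t : Set X} (ht : IsClosed t)
    (hts : t ⊆ s) (hst : MapsTo f s t) : s ⊆ t := by
  intro x hx
  refine closure_minimal (range_subset_iff.mpr fun n => ?_) ht (hf.mem_closure_range_iterate x)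
  rw [Function.iterate_succ_apply']
  exact hst ((hst.mono_right hts).iterate n hx)

theorem IsometryEquiv.not_image_biUnion_eventuallyLE_of_ssubset {ι : Type*} [Countable ι]
    {A : ι → Set X} (hopen : ∀ k, IsOpen (A k)) (hne : ∀ k, (A k).Nonempty)
    (hqd : ∀ k k', k ≠ k' → IsMeagre (A k ∩ A k')) (e : X ≃ᵢ X) {P Q : Set ι} (hQP : Q ⊂ P) :
    ¬ e '' (⋃ k ∈ P, A k) ≤ᶠ[residual X] ⋃ k ∈ Q, A k := by
  intro h
  have hUopen : ∀ B : Set ι, IsOpen (⋃ k ∈ B, A k) := fun B => isOpen_biUnion fun k _ => hopen k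
  have himage : e '' (⋃ k ∈ P, A k) ⊆ closure (⋃ k ∈ Q, A k) :=
    (e.toHomeomorph.isOpenMap _ (hUopen P)).subset_closure_of_eventuallyLE_residual h
  have hclosure : closure (⋃ k ∈ P, A k) ⊆ closure (⋃ k ∈ Q, A k) :=
    e.isometry.subset_of_mapsTo isClosed_closure
      (closure_mono (biUnion_subset_biUnion_left hQP.subset))
      (mapsTo_iff_image_subset.mpr ((image_closure_subset_closure_image e.continuous).trans
        (closure_minimal himage isClosed_closure)))
  obtain ⟨k, hkP, hkQ⟩ := exists_of_ssubset hQP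
  obtain ⟨x, hx⟩ := hne k
  have hmeets : (A k ∩ ⋃ k ∈ Q, A k).Nonempty :=
    mem_closure_iff.mp (hclosure (subset_closure (mem_biUnion hkP hx))) _ (hopen k) hx
  refine not_isMeagre_of_isOpen ((hopen k).inter (hUopen Q)) hmeets ?_
  simpa using isMeagre_biUnion_inter_biUnion hqd (disjoint_singleton_left.mpr hkQ)

end Compact

instance : CompactSpace S2 :=
  isCompact_iff_compactSpace.mp (isCompact_sphere 0 1)

noncomputable def sphereIsometryEquiv (σ : E3 ≃ₗᵢ[ℝ] E3) : S2 ≃ᵢ S2 where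
  toFun := sphereMap σ
  invFun := sphereMap σ.symm
  left_inv x := Subtype.ext (σ.symm_apply_apply x)
  right_inv x := Subtype.ext (σ.apply_symm_apply x)
  isometry_toFun := Isometry.of_dist_eq fun x y => σ.dist_map x y

/-- If a system of congruences has a quasi-solution in `S²` consisting of nonempty open sets,
with witnesses isometries of `S²` (restrictions of elements of O(3)), then the system is
consistent. -/
theorem stmt_8 {r m : ℕ} (L R : Fin m → Set (Fin r))
    (A : Fin r → Set S2)
    (hopen : ∀ k, IsOpen (A k)) (hne : ∀ k, (A k).Nonempty)
    (hqd : ∀ k k', k ≠ k' → IsMeagre (A k ∩ A k'))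
    (hcover : (⋃ k, A k) ∈ residual S2)
    (hwit : ∀ i, ∃ σ : E3 ≃ₗᵢ[ℝ] E3,
      IsMeagre (symmDiff (sphereMap σ '' ⋃ k ∈ L i, A k) (⋃ k ∈ R i, A k))) :
    SysConsistent L R := by
  intro P Q hPQ hQP
  have hwit' : ∀ i, ∃ e : S2 ≃ᵢ S2,
      e '' (⋃ k ∈ L i, A k) =ᶠ[residual S2] ⋃ k ∈ R i, A k := fun i => by
    obtain ⟨σ, hσ⟩ := hwit i
    exact ⟨sphereIsometryEquiv σ, isMeagre_symmDiff_iff_eventuallyEq.mp hσ⟩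
  obtain ⟨e, he⟩ := hPQ.exists_isometryEquiv_image_eventuallyLE hqd hcover hwit'
  exact e.not_image_biUnion_eventuallyLE_of_ssubset hopen hne hqd hQP he
end

section
/- Let (L_i, R_i), 1 ≤ i ≤ m, be a system of proper congruences on {1,…,r} which is weak, consistent, and nonredundant. Then every directed walk of length 2^r in the digraph 𝒢 contains two consecutive edges that traverse a good 2-cycle: there is an index i and a pair of vertices (U, V) with (U, V) = (L_i, R_i) or (U, V) = (L_i^c, R_i^c) such that one of the two consecutive edges is the good edge U → V with positive label i and the other is the good edge V → U with inverse label i. -/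
open Set

/-- A vertex of the digraph `𝒢`: a nonempty proper subset of `{1,…,r}`. -/
def GVert {r : ℕ} (S : Set (Fin r)) : Prop := S.Nonempty ∧ S ≠ univ

/-- The edge relation of the labeled digraph `𝒢`: labels are pairs `(i, b)` with `b = true`
for the positive label `f i` and `b = false` for the inverse label `f i⁻¹`. -/
def GEdge {r m : ℕ} (L R : Fin m → Set (Fin r))
    (S : Set (Fin r)) (lab : Fin m × Bool) (T : Set (Fin r)) : Prop :=
  GVert S ∧ GVert T ∧
    (if lab.2 then (L lab.1 ⊆ S ∧ T = R lab.1) ∨ ((L lab.1)ᶜ ⊆ S ∧ T = (R lab.1)ᶜ)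
     else (R lab.1 ⊆ S ∧ T = L lab.1) ∨ ((R lab.1)ᶜ ⊆ S ∧ T = (L lab.1)ᶜ))

/-- A good edge of `𝒢`: its source is exactly the corresponding left (resp. right) set. -/
def GGoodEdge {r m : ℕ} (L R : Fin m → Set (Fin r))
    (S : Set (Fin r)) (lab : Fin m × Bool) (T : Set (Fin r)) : Prop :=
  GEdge L R S lab T ∧
    (if lab.2 then (S = L lab.1 ∧ T = R lab.1) ∨ (S = (L lab.1)ᶜ ∧ T = (R lab.1)ᶜ)
     else (S = R lab.1 ∧ T = L lab.1) ∨ (S = (R lab.1)ᶜ ∧ T = (L lab.1)ᶜ))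

/-- A bad edge of `𝒢`: an edge which is not good. -/
def GBadEdge {r m : ℕ} (L R : Fin m → Set (Fin r))
    (S : Set (Fin r)) (lab : Fin m × Bool) (T : Set (Fin r)) : Prop :=
  GEdge L R S lab T ∧ ¬ GGoodEdge L R S lab T

/-!
A walk of length `2 ^ r` visits `2 ^ r + 1` subsets of `Fin r`, so it contains a closed subwalk
that is a cycle. Every edge `S → T` gives `T ⪯ S`; going around the cycle then gives `S ⪯ T` as
well, and consistency forces every edge of the cycle to be good. A good edge labelled `i` joins
`L i` and `R i`, or their complements. A loop would mean `L i = R i`. If the label `i` of the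
first edge did not recur on the cycle, the rest of the cycle would deduce `(L i, R i)` without
congruence `i`. So it recurs, and by weakness on the same side (no set is congruent to its
complement); as the vertices of a cycle are distinct, the second edge starts where the first one
ends, so it is the very next edge and it returns to the start.
-/

section
variable {r m : ℕ} {L R : Fin m → Set (Fin r)}

/-- The four sets `L i`, `R i`, `(L i)ᶜ`, `(R i)ᶜ` indexed by two booleans, so that a good edge
with label `(i, b)` runs from `side L R i b c` to `side L R i (!b) c`. -/
def side (L R : Fin m → Set (Fin r)) (i : Fin m) (b c : Bool) : Set (Fin r) :=
  if c then (if b then L i else R i)ᶜ else (if b then L i else R i)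

theorem GGoodEdge.exists_side {S T : Set (Fin r)} {i : Fin m} {b : Bool}
    (h : GGoodEdge L R S (i, b) T) : ∃ c, S = side L R i b c ∧ T = side L R i (!b) c := by
  obtain ⟨-, h⟩ := h
  cases b <;> simp only [Bool.false_eq_true, if_false, if_true] at h <;>
    rcases h with ⟨rfl, rfl⟩ | ⟨rfl, rfl⟩
  exacts [⟨false, rfl, rfl⟩, ⟨true, rfl, rfl⟩, ⟨false, rfl, rfl⟩, ⟨true, rfl, rfl⟩]

theorem side_ne_side_not {i : Fin m} (hLR : L i ≠ R i) (b c : Bool) :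
    side L R i b c ≠ side L R i (!b) c := by
  cases b <;> cases c <;> simp [side, hLR, hLR.symm]

theorem congDed_side {P : Set (Set (Fin r) × Set (Fin r))} {i : Fin m} (hP : (L i, R i) ∈ P)
    (b b' c : Bool) : CongDed P (side L R i b c) (side L R i b' c) := by
  have hLR : CongDed P (side L R i true c) (side L R i false c) := by
    cases c
    exacts [.base hP, .compl (.base hP)]
  cases b <;> cases b'
  exacts [hLR.symm.trans hLR, hLR.symm, hLR, hLR.trans hLR.symm]

theorem congDed_of_congDed_side_not {P : Set (Set (Fin r) × Set (Fin r))} {i : Fin m}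
    {b c : Bool} (h : CongDed P (side L R i (!b) c) (side L R i b c)) : CongDed P (L i) (R i) := by
  cases b <;> cases c <;> simp only [side, Bool.not_false, Bool.not_true, Bool.false_eq_true,
    if_false, if_true] at h
  exacts [h, by simpa using h.compl, h.symm, by simpa using h.compl.symm]

theorem SysWeak.eq_of_congDed_side (hweak : SysWeak L R) {i : Fin m} {b b' c c' : Bool}
    (h : CongDed {p | ∃ i, p = (L i, R i)} (side L R i b c) (side L R i b' c')) : c = c' := by
  have hmem : (L i, R i) ∈ {p | ∃ i, p = (L i, R i)} := ⟨i, rfl⟩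
  have hL := ((congDed_side hmem true b c).trans h).trans (congDed_side hmem b' true c')
  cases c <;> cases c' <;> simp only [side, if_true, if_false, Bool.false_eq_true] at hL
  exacts [rfl, absurd hL (hweak _), absurd hL.symm (hweak _), rfl]

theorem subCong_of_gEdge {S T : Set (Fin r)} {lab : Fin m × Bool}
    (h : GEdge L R S lab T) : SubCong L R T S := by
  obtain ⟨-, -, h⟩ := h
  obtain ⟨i, b⟩ := lab
  cases b <;> simp only [Bool.false_eq_true, if_false, if_true] at h <;>
    rcases h with ⟨hS, rfl⟩ | ⟨hS, rfl⟩
  exacts [(SubCong.lr i).trans (.subset hS), (SubCong.lrc i).trans (.subset hS),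
    (SubCong.rl i).trans (.subset hS), (SubCong.rlc i).trans (.subset hS)]

theorem GEdge.gGoodEdge_of_subCong (hcons : SysConsistent L R) {S T : Set (Fin r)}
    {lab : Fin m × Bool} (h : GEdge L R S lab T) (hST : SubCong L R S T) :
    GGoodEdge L R S lab T := by
  refine ⟨h, ?_⟩
  obtain ⟨-, -, h⟩ := h
  obtain ⟨i, b⟩ := lab
  cases b <;> simp only [Bool.false_eq_true, if_false, if_true] at h ⊢ <;>
    rcases h with ⟨hS, rfl⟩ | ⟨hS, rfl⟩
  · exact .inl ⟨(hS.eq_of_not_ssubset (hcons _ _ (hST.trans (.lr i)))).symm, rfl⟩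
  · exact .inr ⟨(hS.eq_of_not_ssubset (hcons _ _ (hST.trans (.lrc i)))).symm, rfl⟩
  · exact .inl ⟨(hS.eq_of_not_ssubset (hcons _ _ (hST.trans (.rl i)))).symm, rfl⟩
  · exact .inr ⟨(hS.eq_of_not_ssubset (hcons _ _ (hST.trans (.rlc i)))).symm, rfl⟩

theorem congDed_of_gGoodEdge {P : Set (Set (Fin r) × Set (Fin r))} {S T : Set (Fin r)}
    {lab : Fin m × Bool} (hP : (L lab.1, R lab.1) ∈ P) (h : GGoodEdge L R S lab T) :
    CongDed P S T := by
  obtain ⟨c, rfl, rfl⟩ := GGoodEdge.exists_side h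
  exact congDed_side hP _ _ c

theorem subCong_of_walk {v : ℕ → Set (Fin r)} {e : ℕ → Fin m × Bool} {a b : ℕ}
    (hwalk : ∀ j, a ≤ j → j < b → GEdge L R (v j) (e j) (v (j + 1))) (hab : a ≤ b) :
    SubCong L R (v b) (v a) := by
  induction b, hab using Nat.le_induction with
  | base => exact .subset subset_rfl
  | succ n hn ih =>
    exact (subCong_of_gEdge (hwalk n hn n.lt_succ_self)).trans
      (ih fun j hj hjn => hwalk j hj (hjn.trans n.lt_succ_self))

theorem CongDed.of_forall_succ {P : Set (Set (Fin r) × Set (Fin r))} {v : ℕ → Set (Fin r)}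
    {a b : ℕ} (h : ∀ j, a ≤ j → j < b → CongDed P (v j) (v (j + 1))) (hab : a < b) :
    CongDed P (v a) (v b) := by
  induction b, hab using Nat.le_induction with
  | base => exact h a le_rfl a.lt_succ_self
  | succ n hn ih =>
    exact (ih fun j hj hjn => h j hj (hjn.trans n.lt_succ_self)).trans
      (h n (Nat.le_of_succ_le hn) n.lt_succ_self)

theorem gGoodEdge_of_closed_walk (hcons : SysConsistent L R) {v : ℕ → Set (Fin r)}
    {e : ℕ → Fin m × Bool} {a d : ℕ}
    (hwalk : ∀ j, a ≤ j → j < a + d → GEdge L R (v j) (e j) (v (j + 1)))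
    (hclosed : v a = v (a + d)) {j : ℕ} (hj : a ≤ j) (hjd : j < a + d) :
    GGoodEdge L R (v j) (e j) (v (j + 1)) := by
  have hja : SubCong L R (v j) (v a) :=
    subCong_of_walk (fun k hk hkj => hwalk k hk (hkj.trans hjd)) hj
  have hdj : SubCong L R (v (a + d)) (v (j + 1)) :=
    subCong_of_walk (fun k hk hkd => hwalk k (by omega) hkd) hjd
  exact (hwalk j hj hjd).gGoodEdge_of_subCong hcons (hja.trans (hclosed ▸ hdj))

theorem exists_twoCycle_of_injOn (hweak : SysWeak L R) (hnonred : SysNonredundant L R)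
    {v : ℕ → Set (Fin r)} {e : ℕ → Fin m × Bool} {a d : ℕ}
    (hgood : ∀ j, a ≤ j → j < a + d → GGoodEdge L R (v j) (e j) (v (j + 1)))
    (hd : 0 < d) (hclosed : v a = v (a + d)) (hinj : InjOn v (Ico a (a + d))) :
    1 < d ∧ ∃ i b c, e a = (i, b) ∧ e (a + 1) = (i, !b) ∧ v a = side L R i b c ∧
      v (a + 1) = side L R i (!b) c ∧ v (a + 2) = side L R i b c := by
  rcases hea : e a with ⟨i, b⟩
  obtain ⟨c, hva, hva₁⟩ := (hea ▸ hgood a le_rfl (by omega)).exists_side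
  have hd₁ : 1 < d := by
    by_contra! hd₁
    obtain rfl : d = 1 := by omega
    exact side_ne_side_not (hnonred.2 i) b c (hva.symm.trans (hclosed.trans hva₁))
  obtain ⟨j, ⟨haj, hjd⟩, hij⟩ : ∃ j ∈ Ioo a (a + d), (e j).1 = i := by
    by_contra! hnone
    have hrest := CongDed.of_forall_succ (P := {p | ∃ k, k ≠ i ∧ p = (L k, R k)})
      (fun j hj hjd => congDed_of_gGoodEdge ⟨(e j).1, hnone j ⟨hj, hjd⟩, rfl⟩
        (hgood j (by omega) hjd))
      (show a + 1 < a + d by omega)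
    rw [← hclosed, hva, hva₁] at hrest
    exact hnonred.1 i (congDed_of_congDed_side_not hrest)
  rcases hej : e j with ⟨i', b'⟩
  obtain rfl : i = i' := by rw [← hij, hej]
  obtain ⟨c', hvj, hvj₁⟩ := (hej ▸ hgood j haj.le hjd).exists_side
  have hcong : CongDed {p | ∃ i, p = (L i, R i)} (v a) (v j) :=
    CongDed.of_forall_succ (fun k hk hkj => congDed_of_gGoodEdge ⟨_, rfl⟩
      (hgood k hk (hkj.trans hjd))) haj
  rw [hva, hvj] at hcong
  obtain rfl : c = c' := hweak.eq_of_congDed_side hcong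
  obtain rfl : b' = !b := by
    by_contra hbb'
    rw [Bool.not_eq_not.mp hbb'] at hvj
    exact haj.ne (hinj ⟨le_rfl, by omega⟩ ⟨haj.le, hjd⟩ (hva.trans hvj.symm))
  obtain rfl : j = a + 1 :=
    hinj ⟨haj.le, hjd⟩ ⟨by omega, by omega⟩ (hvj.trans hva₁.symm)
  exact ⟨hd₁, i, b, c, rfl, hej, hva, hva₁, by rw [hvj₁, Bool.not_not]⟩

end

theorem exists_injOn_Ico_of_card_le {α : Type*} [Fintype α] (v : ℕ → α) {N : ℕ}
    (hN : Fintype.card α ≤ N) :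
    ∃ a d, 0 < d ∧ a + d ≤ N ∧ v a = v (a + d) ∧ InjOn v (Ico a (a + d)) := by
  classical
  have hrep : ∃ d, 0 < d ∧ ∃ a, a + d ≤ N ∧ v a = v (a + d) := by
    obtain ⟨x, y, hxy, hv⟩ := Fintype.exists_ne_map_eq_of_card_lt (fun k : Fin (N + 1) => v k)
      (by simpa using Nat.lt_succ_of_le hN)
    rcases lt_or_gt_of_ne (Fin.val_ne_of_ne hxy) with h | h
    · exact ⟨y - x, by omega, x, by omega, by rwa [Nat.add_sub_cancel' h.le]⟩
    · exact ⟨x - y, by omega, y, by omega, by rw [Nat.add_sub_cancel' h.le]; exact hv.symm⟩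
  obtain ⟨hd, a, haN, hva⟩ := Nat.find_spec hrep
  have hshort : ∀ c ∈ Ico a (a + Nat.find hrep), ∀ c' ∈ Ico a (a + Nat.find hrep),
      c < c' → v c ≠ v c' := fun c hc c' hc' hcc' hv =>
    (Nat.find_min' hrep ⟨Nat.sub_pos_of_lt hcc', c, by simp at hc hc'; omega,
      by rwa [Nat.add_sub_cancel' hcc'.le]⟩).not_gt (by simp at hc hc'; omega)
  refine ⟨a, Nat.find hrep, hd, haN, hva, fun c hc c' hc' hv => ?_⟩
  rcases lt_trichotomy c c' with h | h | h
  exacts [absurd hv (hshort c hc c' hc' h), h, absurd hv.symm (hshort c' hc' c hc h)]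

theorem stmt_19_general {r m : ℕ} (L R : Fin m → Set (Fin r))
    (hweak : SysWeak L R) (hcons : SysConsistent L R) (hnonred : SysNonredundant L R)
    (v : ℕ → Set (Fin r)) (e : ℕ → Fin m × Bool)
    (hwalk : ∀ j < 2 ^ r, GEdge L R (v j) (e j) (v (j + 1))) :
    ∃ j, j + 1 < 2 ^ r ∧ ∃ (i : Fin m) (U V : Set (Fin r)),
      ((U = L i ∧ V = R i) ∨ (U = (L i)ᶜ ∧ V = (R i)ᶜ)) ∧
      ((v j = U ∧ e j = (i, true) ∧ v (j + 1) = V ∧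
          e (j + 1) = (i, false) ∧ v (j + 2) = U) ∨
       (v j = V ∧ e j = (i, false) ∧ v (j + 1) = U ∧
          e (j + 1) = (i, true) ∧ v (j + 2) = V)) := by
  obtain ⟨a, d, hd, hadN, hclosed, hinj⟩ :=
    exists_injOn_Ico_of_card_le v (N := 2 ^ r) (by simp)
  have hgood : ∀ j, a ≤ j → j < a + d → GGoodEdge L R (v j) (e j) (v (j + 1)) :=
    fun _ hj hjd =>
      gGoodEdge_of_closed_walk hcons (fun k _ hk => hwalk k (by omega)) hclosed hj hjd
  obtain ⟨hd₁, i, b, c, hea, hea₁, hva, hva₁, hva₂⟩ :=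
    exists_twoCycle_of_injOn hweak hnonred hgood hd hclosed hinj
  refine ⟨a, by omega, i, side L R i true c, side L R i false c,
    by cases c <;> simp [side], ?_⟩
  cases b
  · exact .inr ⟨hva, hea, hva₁, hea₁, hva₂⟩
  · exact .inl ⟨hva, hea, hva₁, hea₁, hva₂⟩

/-- **Claim 3.** If a system of proper congruences is weak, consistent, and nonredundant, then
every directed walk of length `2 ^ r` in the digraph `𝒢` contains a pair of consecutive edges
traversing a good 2-cycle: for some `i` and `(U, V) = (L i, R i)` or `((L i)ᶜ, (R i)ᶜ)`, one
of the two consecutive edges is the good edge `U → V` with positive label `i` and the other is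
the good edge `V → U` with inverse label `i`. -/
theorem stmt_19 {r m : ℕ} (L R : Fin m → Set (Fin r)) (hproper : SysProper L R)
    (hweak : SysWeak L R) (hcons : SysConsistent L R) (hnonred : SysNonredundant L R)
    (v : ℕ → Set (Fin r)) (e : ℕ → Fin m × Bool)
    (hwalk : ∀ j < 2 ^ r, GEdge L R (v j) (e j) (v (j + 1))) :
    ∃ j, j + 1 < 2 ^ r ∧ ∃ (i : Fin m) (U V : Set (Fin r)),
      ((U = L i ∧ V = R i) ∨ (U = (L i)ᶜ ∧ V = (R i)ᶜ)) ∧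
      ((v j = U ∧ e j = (i, true) ∧ v (j + 1) = V ∧
          e (j + 1) = (i, false) ∧ v (j + 2) = U) ∨
       (v j = V ∧ e j = (i, false) ∧ v (j + 1) = U ∧
          e (j + 1) = (i, true) ∧ v (j + 2) = V)) :=
  stmt_19_general L R hweak hcons hnonred v e hwalk
end
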